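/- arXiv:2307.06421 — 8 statements merged into one kernel-verified Lean document; each statement's English description precedes it below -/
import Mathlib

section
/- For all natural numbers m ≥ 1, r ≥ 0, s ≥ 0 and every y ∈ [s/(m+s), (s+1)/(m+s+1)], one has z_{m,r}(y) ≤ z_{m,s}(y); equivalently, m_{r,m,s}(y) ≤ 1. -/
/-- `z_{m,r}(y) = C(m+r, r) · y^r`. -/
noncomputable def z (m r : ℕ) (y : ℝ) : ℝ := (Nat.choose (m + r) r : ℝ) * y ^ r

theorem z_le_z_center (m r s : ℕ) (hm : 1 ≤ m)
    (y : ℝ) (hy : y ∈ Set.Icc ((s : ℝ) / ((m : ℝ) + s)) (((s : ℝ) + 1) / ((m : ℝ) + s + 1))) :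
    z m r y ≤ z m s y := by
  obtain ⟨hy1, hy2⟩ := hy
  have hm' : (1:ℝ) ≤ (m:ℝ) := by exact_mod_cast hm
  have hms : (0:ℝ) < (m:ℝ) + s := by positivity
  have hy0 : 0 ≤ y := le_trans (by positivity) hy1
  -- monotone fraction lemma : a ≤ b → a/(m+a) ≤ b/(m+b)
  have gmono : ∀ a b : ℕ, a ≤ b → (a:ℝ)/((m:ℝ)+a) ≤ (b:ℝ)/((m:ℝ)+b) := by
    intro a b hab
    have hab' : (a:ℝ) ≤ b := by exact_mod_cast hab
    rw [div_le_div_iff₀ (by positivity) (by positivity)]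
    nlinarith
  -- combinatorial identity
  have hc : ∀ t : ℕ, ((Nat.choose (m+t) t : ℝ)) * ((m:ℝ)+t+1)
      = (Nat.choose (m+(t+1)) (t+1) : ℝ) * ((t:ℝ)+1) := by
    intro t
    have h := Nat.add_one_mul_choose_eq (m+t) t
    have h2 : m + (t+1) = (m+t) + 1 := by omega
    rw [h2]
    have := congrArg (Nat.cast (R := ℝ)) h
    push_cast at this ⊢
    linarith [this]
  have step_up : ∀ t : ℕ, ((t:ℝ)+1)/((m:ℝ)+t+1) ≤ y → z m t y ≤ z m (t+1) y := by
    intro t ht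
    have hd : (0:ℝ) < (m:ℝ)+t+1 := by positivity
    have key : (Nat.choose (m+t) t : ℝ) ≤ (Nat.choose (m+(t+1)) (t+1) : ℝ) * y := by
      have h1 : (Nat.choose (m+(t+1)) (t+1) : ℝ) * (((t:ℝ)+1)/((m:ℝ)+t+1))
          ≤ (Nat.choose (m+(t+1)) (t+1) : ℝ) * y :=
        mul_le_mul_of_nonneg_left ht (by positivity)
      calc (Nat.choose (m+t) t : ℝ)
          = (Nat.choose (m+(t+1)) (t+1) : ℝ) * (((t:ℝ)+1)/((m:ℝ)+t+1)) := by
            field_simp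
            linarith [hc t]
        _ ≤ _ := h1
    have : (Nat.choose (m+t) t : ℝ) * y ^ t ≤ ((Nat.choose (m+(t+1)) (t+1) : ℝ) * y) * y ^ t :=
      mul_le_mul_of_nonneg_right key (by positivity)
    simpa [z, pow_succ, mul_comm, mul_left_comm, mul_assoc] using this
  have step_down : ∀ t : ℕ, y ≤ ((t:ℝ)+1)/((m:ℝ)+t+1) → z m (t+1) y ≤ z m t y := by
    intro t ht
    have hd : (0:ℝ) < (m:ℝ)+t+1 := by positivity
    have key : (Nat.choose (m+(t+1)) (t+1) : ℝ) * y ≤ (Nat.choose (m+t) t : ℝ) := by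
      have h1 : (Nat.choose (m+(t+1)) (t+1) : ℝ) * y
          ≤ (Nat.choose (m+(t+1)) (t+1) : ℝ) * (((t:ℝ)+1)/((m:ℝ)+t+1)) :=
        mul_le_mul_of_nonneg_left ht (by positivity)
      calc (Nat.choose (m+(t+1)) (t+1) : ℝ) * y
          ≤ (Nat.choose (m+(t+1)) (t+1) : ℝ) * (((t:ℝ)+1)/((m:ℝ)+t+1)) := h1
        _ = (Nat.choose (m+t) t : ℝ) := by
            field_simp
            linarith [hc t]
    have : ((Nat.choose (m+(t+1)) (t+1) : ℝ) * y) * y ^ t ≤ (Nat.choose (m+t) t : ℝ) * y ^ t :=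
      mul_le_mul_of_nonneg_right key (by positivity)
    simpa [z, pow_succ, mul_comm, mul_left_comm, mul_assoc] using this
  rcases le_or_gt r s with hrs | hsr
  · -- climb up from r to s
    obtain ⟨n, hn⟩ := Nat.le.dest hrs
    clear hrs
    induction n generalizing r with
    | zero => simp at hn; subst hn; simp
    | succ n ih =>
      have hr1 : r + 1 ≤ s := by omega
      have hfr : ((r:ℝ)+1)/((m:ℝ)+r+1) ≤ y := by
        refine le_trans ?_ hy1
        have h := gmono (r+1) s hr1
        push_cast at h
        ring_nf at h ⊢
        linarith [h]
      exact le_trans (step_up r hfr) (ih (r+1) (by omega))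
  · -- descend from r down to s
    obtain ⟨n, hn⟩ := Nat.le.dest (Nat.le_of_lt hsr)
    subst hn
    clear hsr
    induction n with
    | zero => simp
    | succ n ih =>
      have hfr : y ≤ ((s+n:ℝ)+1)/((m:ℝ)+(s+n)+1) := by
        refine le_trans hy2 ?_
        have h := gmono (s+1) (s+n+1) (by omega)
        push_cast at h ⊢
        ring_nf at h ⊢
        linarith [h]
      have h1 : z m (s + n + 1) y ≤ z m (s + n) y := by
        have := step_down (s+n) (by push_cast; push_cast at hfr; linarith)
        simpa using this
      have h2 : s + (n+1) = (s + n) + 1 := by omega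
      rw [h2]
      exact le_trans h1 ih
end

section
/- For every natural number m ≥ 1, every natural number s, and every y ∈ [s/(m+s), (s+1)/(m+s+1)], the supremum over r ∈ ℕ of z_{m,r}(y) is attained at r = s, i.e., sup_{r∈ℕ} z_{m,r}(y) = z_{m,s}(y). -/
theorem iSup_z_eq_center (m s : ℕ) (hm : 1 ≤ m)
    (y : ℝ) (hy : y ∈ Set.Icc ((s : ℝ) / ((m : ℝ) + s)) (((s : ℝ) + 1) / ((m : ℝ) + s + 1))) :
    (⨆ r : ℕ, z m r y) = z m s y := by
  obtain ⟨hy0, hy1⟩ := hy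
  have hm1 : (1 : ℝ) ≤ (m : ℝ) := by exact_mod_cast hm
  have hynn : (0 : ℝ) ≤ y := le_trans (by positivity) hy0
  have hznn : ∀ r : ℕ, 0 ≤ z m r y := by
    intro r; unfold z; positivity
  have hstep : ∀ r : ℕ, ((r : ℝ) + 1) * z m (r + 1) y = ((m : ℝ) + r + 1) * y * z m r y := by
    intro r
    have h := Nat.add_one_mul_choose_eq (m + r) r
    have h' : ((m : ℝ) + r + 1) * ((m + r).choose r : ℝ) =
        ((m + r + 1).choose (r + 1) : ℝ) * ((r : ℝ) + 1) := by exact_mod_cast h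
    have hz : z m (r + 1) y = ((m + r + 1).choose (r + 1) : ℝ) * (y ^ r * y) := by
      unfold z
      rw [show m + (r + 1) = m + r + 1 from rfl, pow_succ]
    rw [hz]
    unfold z
    linear_combination (-(y ^ r * y)) * h'
  have hup : ∀ r : ℕ, r < s → z m r y ≤ z m (r + 1) y := by
    intro r hr
    have hpos : (0 : ℝ) < (m : ℝ) + r + 1 := by positivity
    have hpos' : (0 : ℝ) < (m : ℝ) + s := by positivity
    have hratio : ((r : ℝ) + 1) / ((m : ℝ) + r + 1) ≤ (s : ℝ) / ((m : ℝ) + s) := by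
      rw [div_le_div_iff₀ hpos hpos']
      have : (r : ℝ) + 1 ≤ (s : ℝ) := by exact_mod_cast hr
      nlinarith
    have hy' : ((r : ℝ) + 1) / ((m : ℝ) + r + 1) ≤ y := le_trans hratio hy0
    have hkey : (r : ℝ) + 1 ≤ ((m : ℝ) + r + 1) * y := by
      rw [div_le_iff₀ hpos] at hy'
      linarith [hy']
    have h1 : ((r : ℝ) + 1) * z m r y ≤ ((r : ℝ) + 1) * z m (r + 1) y := by
      rw [hstep r]
      nlinarith [hznn r]
    have : (0 : ℝ) < (r : ℝ) + 1 := by positivity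
    exact le_of_mul_le_mul_left h1 this
  have hdown : ∀ r : ℕ, s ≤ r → z m (r + 1) y ≤ z m r y := by
    intro r hr
    have hpos : (0 : ℝ) < (m : ℝ) + r + 1 := by positivity
    have hpos' : (0 : ℝ) < (m : ℝ) + s + 1 := by positivity
    have hratio : ((s : ℝ) + 1) / ((m : ℝ) + s + 1) ≤ ((r : ℝ) + 1) / ((m : ℝ) + r + 1) := by
      rw [div_le_div_iff₀ hpos' hpos]
      have : (s : ℝ) ≤ (r : ℝ) := by exact_mod_cast hr
      nlinarith
    have hy' : y ≤ ((r : ℝ) + 1) / ((m : ℝ) + r + 1) := le_trans hy1 hratio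
    have hkey : ((m : ℝ) + r + 1) * y ≤ (r : ℝ) + 1 := by
      rw [le_div_iff₀ hpos] at hy'
      linarith [hy']
    have h1 : ((r : ℝ) + 1) * z m (r + 1) y ≤ ((r : ℝ) + 1) * z m r y := by
      rw [hstep r]
      nlinarith [hznn r]
    have : (0 : ℝ) < (r : ℝ) + 1 := by positivity
    exact le_of_mul_le_mul_left h1 this
  have hle : ∀ r : ℕ, z m r y ≤ z m s y := by
    have h2 : ∀ k : ℕ, z m (s + k) y ≤ z m s y := by
      intro k
      induction k with
      | zero => simp
      | succ k ih =>
        have := hdown (s + k) (Nat.le_add_right s k)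
        calc z m (s + (k + 1)) y = z m (s + k + 1) y := by ring_nf
          _ ≤ z m (s + k) y := this
          _ ≤ z m s y := ih
    have h1 : ∀ k : ℕ, z m (s - k) y ≤ z m s y := by
      intro k
      induction k with
      | zero => simp
      | succ k ih =>
        rcases le_or_gt (k + 1) s with h | h
        · have hlt : s - (k + 1) < s := by omega
          have heq : s - (k + 1) + 1 = s - k := by omega
          have := hup (s - (k + 1)) hlt
          rw [heq] at this
          exact le_trans this ih
        · have : s - (k + 1) = s - k := by omega
          rw [this]; exact ih
    intro r
    rcases le_or_gt r s with h | h
    · have : r = s - (s - r) := by omega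
      rw [this]; exact h1 (s - r)
    · have : r = s + (r - s) := by omega
      rw [this]; exact h2 (r - s)
  apply le_antisymm
  · exact ciSup_le hle
  · exact le_ciSup ⟨z m s y, by rintro x ⟨r, rfl⟩; exact hle r⟩ s
end

section
/- Let m ≥ 1 and α ≥ 2 be integers. For every y ∈ [0, 1/(m+1)] and every natural number r, one has M_{r,m,0}(y) ≤ 2·(1−y)·y^{1/α}/m^{1−1/α}; consequently sup_{r∈ℕ} M_{r,m,0}(y) ≤ 2·(1−y)·y^{1/α}/m^{1−1/α}. -/
/-- `M_{r,m,0}(y) = z_{m,r}(y) · |r/(m+r) − y|` (since `z_{m,0}(y) = 1`). -/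
noncomputable def MKer0 (m r : ℕ) (y : ℝ) : ℝ :=
  z m r y * |(r : ℝ) / ((m : ℝ) + r) - y|

lemma choose_succ_le (m s : ℕ) :
    (Nat.choose (m + s + 1) (s + 1) : ℝ) ≤ (m + 1) * Nat.choose (m + s) s := by
  have hnat : (m + s + 1) * Nat.choose (m + s) s = Nat.choose (m + s + 1) (s + 1) * (s + 1) :=
    Nat.add_one_mul_choose_eq (m + s) s
  have hle : m + s + 1 ≤ (m + 1) * (s + 1) := by
    have h := Nat.le_add_left (m + s + 1) (m * s)
    calc m + s + 1 ≤ m * s + (m + s + 1) := h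
      _ = (m + 1) * (s + 1) := by ring
  have h2 : Nat.choose (m + s + 1) (s + 1) * (s + 1) ≤ ((m + 1) * Nat.choose (m + s) s) * (s + 1) := by
    calc Nat.choose (m + s + 1) (s + 1) * (s + 1) = (m + s + 1) * Nat.choose (m + s) s := hnat.symm
      _ ≤ ((m + 1) * (s + 1)) * Nat.choose (m + s) s := Nat.mul_le_mul_right _ hle
      _ = ((m + 1) * Nat.choose (m + s) s) * (s + 1) := by ring
  have := Nat.le_of_mul_le_mul_right h2 (by omega)
  exact_mod_cast this

lemma z_le_one (m : ℕ) {y : ℝ} (hy0 : 0 ≤ y)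
    (hy1 : ((m : ℝ) + 1) * y ≤ 1) : ∀ r, z m r y ≤ 1 := by
  intro r
  induction r with
  | zero => simp [z]
  | succ s ih =>
    have h1 : z m (s + 1) y = (Nat.choose (m + s + 1) (s + 1) : ℝ) * y ^ (s + 1) := by
      rw [z, show m + (s + 1) = m + s + 1 by omega]
    have hc : (0 : ℝ) ≤ (Nat.choose (m + s) s : ℝ) := by positivity
    calc z m (s + 1) y = (Nat.choose (m + s + 1) (s + 1) : ℝ) * y ^ (s + 1) := h1
      _ ≤ ((m + 1) * Nat.choose (m + s) s) * y ^ (s + 1) := by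
          apply mul_le_mul_of_nonneg_right (choose_succ_le m s) (by positivity)
      _ = (z m s y) * (((m : ℝ) + 1) * y) := by rw [z]; ring
      _ ≤ 1 * 1 := by
          apply mul_le_mul ih hy1 (by positivity) zero_le_one
      _ = 1 := by ring

lemma MKer0_le (m : ℕ) (hm : 1 ≤ m) {y : ℝ} (hy0 : 0 ≤ y)
    (hy1 : ((m : ℝ) + 1) * y ≤ 1) : ∀ r, MKer0 m r y ≤ y := by
  intro r
  cases r with
  | zero =>
    have hm0 : (m : ℝ) ≠ 0 := by positivity
    simp [MKer0, z, abs_of_nonneg hy0]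
  | succ s =>
    have hd : (0 : ℝ) < (m : ℝ) + (s + 1 : ℕ) := by positivity
    set t : ℝ := ((s + 1 : ℕ) : ℝ) / ((m : ℝ) + (s + 1 : ℕ)) with ht
    have ht0 : 0 ≤ t := by positivity
    have habs : |t - y| ≤ max t y := by
      rw [abs_sub_le_iff]
      constructor
      · linarith [le_max_left t y, hy0]
      · linarith [le_max_right t y, ht0]
    have hz0 : 0 ≤ z m (s + 1) y := by
      rw [z]; positivity
    have hzt : z m (s + 1) y * t = y * z m s y := by
      have hnat : ((m + s + 1 : ℕ) : ℝ) * (Nat.choose (m + s) s : ℝ)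
          = (Nat.choose (m + s + 1) (s + 1) : ℝ) * ((s + 1 : ℕ) : ℝ) := by
        exact_mod_cast Nat.add_one_mul_choose_eq (m + s) s
      rw [z, z, show m + (s + 1) = m + s + 1 by omega, ht]
      have hd' : (m : ℝ) + ((s + 1 : ℕ) : ℝ) ≠ 0 := ne_of_gt hd
      field_simp
      push_cast at hnat ⊢
      linear_combination (-(y ^ (s + 1))) * hnat
    have hz1 : z m (s + 1) y ≤ 1 := z_le_one m hy0 hy1 (s + 1)
    have hzs : z m s y ≤ 1 := z_le_one m hy0 hy1 s
    have hzs0 : 0 ≤ z m s y := by rw [z]; positivity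
    calc MKer0 m (s + 1) y = z m (s + 1) y * |t - y| := rfl
      _ ≤ z m (s + 1) y * max t y := mul_le_mul_of_nonneg_left habs hz0
      _ = max (z m (s + 1) y * t) (z m (s + 1) y * y) := by
          rw [mul_max_of_nonneg _ _ hz0]
      _ ≤ y := by
          apply max_le
          · rw [hzt]; nlinarith
          · nlinarith

theorem MKer0_bound (m α : ℕ) (hm : 1 ≤ m) (hα : 2 ≤ α)
    (y : ℝ) (hy : y ∈ Set.Icc (0 : ℝ) (1 / ((m : ℝ) + 1))) :
    (∀ r : ℕ, MKer0 m r y ≤ 2 * (1 - y) * y ^ ((1 : ℝ) / α) / (m : ℝ) ^ (1 - (1 : ℝ) / α)) ∧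
      (⨆ r : ℕ, MKer0 m r y) ≤ 2 * (1 - y) * y ^ ((1 : ℝ) / α) / (m : ℝ) ^ (1 - (1 : ℝ) / α) := by
  obtain ⟨hy0, hy1⟩ := hy
  have hm1 : (0 : ℝ) < (m : ℝ) + 1 := by positivity
  have hmy : ((m : ℝ) + 1) * y ≤ 1 := by
    rw [div_eq_mul_inv, one_mul] at hy1
    calc ((m : ℝ) + 1) * y ≤ ((m : ℝ) + 1) * ((m : ℝ) + 1)⁻¹ := by
          apply mul_le_mul_of_nonneg_left hy1 (le_of_lt hm1)
      _ = 1 := mul_inv_cancel₀ (ne_of_gt hm1)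
  have hmR : (1 : ℝ) ≤ (m : ℝ) := by exact_mod_cast hm
  have hαR : (0 : ℝ) < (α : ℝ) := by positivity
  have hexp0 : 0 ≤ 1 - (1 : ℝ) / α := by
    rw [sub_nonneg, div_le_one hαR]
    exact_mod_cast Nat.one_le_of_lt hα
  -- main: y ≤ RHS
  have hyhalf : y ≤ 1 / 2 := by
    calc y ≤ 1 / ((m : ℝ) + 1) := hy1
      _ ≤ 1 / 2 := by apply div_le_div_of_nonneg_left one_pos.le (by norm_num) (by linarith)
  have hRHS : y ≤ 2 * (1 - y) * y ^ ((1 : ℝ) / α) / (m : ℝ) ^ (1 - (1 : ℝ) / α) := by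
    have hmpow : (0 : ℝ) < (m : ℝ) ^ (1 - (1 : ℝ) / α) :=
      Real.rpow_pos_of_pos (by linarith) _
    rcases eq_or_lt_of_le hy0 with h0 | hypos
    · rw [← h0]
      positivity
    · rw [le_div_iff₀ hmpow]
      have hsplit : y = y ^ ((1 : ℝ) / α) * y ^ (1 - (1 : ℝ) / α) := by
        rw [← Real.rpow_add hypos]
        norm_num
      have hym : y * (m : ℝ) ≤ 1 := by nlinarith
      have hprod : y ^ (1 - (1 : ℝ) / α) * (m : ℝ) ^ (1 - (1 : ℝ) / α)
          = (y * (m : ℝ)) ^ (1 - (1 : ℝ) / α) := (Real.mul_rpow hy0 (by linarith)).symm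
      have hle1 : (y * (m : ℝ)) ^ (1 - (1 : ℝ) / α) ≤ 1 :=
        Real.rpow_le_one (by positivity) hym hexp0
      have h2 : (1 : ℝ) ≤ 2 * (1 - y) := by linarith
      calc y * (m : ℝ) ^ (1 - (1 : ℝ) / α)
          = (y ^ ((1 : ℝ) / α) * y ^ (1 - (1 : ℝ) / α)) * (m : ℝ) ^ (1 - (1 : ℝ) / α) := by
            rw [← hsplit]
        _ = y ^ ((1 : ℝ) / α) * (y ^ (1 - (1 : ℝ) / α) * (m : ℝ) ^ (1 - (1 : ℝ) / α)) := by ring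
        _ = y ^ ((1 : ℝ) / α) * ((y * (m : ℝ)) ^ (1 - (1 : ℝ) / α)) := by rw [hprod]
        _ ≤ y ^ ((1 : ℝ) / α) * (2 * (1 - y)) := by
            apply mul_le_mul_of_nonneg_left (hle1.trans h2) (by positivity)
        _ = 2 * (1 - y) * y ^ ((1 : ℝ) / α) := by ring
  have hkey : ∀ r : ℕ, MKer0 m r y ≤ 2 * (1 - y) * y ^ ((1 : ℝ) / α) / (m : ℝ) ^ (1 - (1 : ℝ) / α) :=
    fun r => (MKer0_le m hm hy0 hmy r).trans hRHS
  exact ⟨hkey, ciSup_le hkey⟩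
end

section
/- Let m ≥ 4, s ≥ 1 and α ≥ 2 be integers, let y ∈ [s/(m+s), (s+1)/(m+s+1)], and let r ≥ s+1 be an integer satisfying s ≥ r − (r + 1 + (s+1)²/m)^{1/α}. Then M_{r,m,s}(y) ≤ 4·(1−y)·y^{1/α}/m^{1−1/α}. -/
/-- `m_{r,m,s}(y) = z_{m,r}(y) / z_{m,s}(y)`. -/
noncomputable def mRatio (m r s : ℕ) (y : ℝ) : ℝ := z m r y / z m s y

/-- `M_{r,m,s}(y) = m_{r,m,s}(y) · |r/(m+r) − y|`. -/
noncomputable def MKer (m r s : ℕ) (y : ℝ) : ℝ :=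
  mRatio m r s y * |(r : ℝ) / ((m : ℝ) + r) - y|

/-!
For `y ≤ (s+1)/(m+s+1)` the sequence `r ↦ z_{m,r}(y)` is nonincreasing from `r = s` on, so
`m_{r,m,s}(y) ≤ 1` and `M_{r,m,s}(y) ≤ r/(m+r) - s/(m+s) = m(r-s)/((m+r)(m+s))`.
The hypothesis says `r - s ≤ A^t` with `A = r + 1 + (s+1)²/m` and `t = 1/α ≤ 1/2`; in particular
`(r - s)² ≤ A`, which forces `2r ≤ 3s + 4`. With `B = ms/(m+s) ≤ my` and
`C = 4(m+r)(m+s)/(m(m+s+1)) ≥ 1` this gives `A ≤ C²B`, hence `A^t ≤ C B^t`, and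
`1 - y ≥ m/(m+s+1)` converts the resulting bound into the claimed one.
-/

open Real

section Kernel

variable {m : ℕ} {y : ℝ}

theorem z_succ_le (k : ℕ) (hy : 0 ≤ y) (h : y * (m + k + 1) ≤ k + 1) :
    z m (k + 1) y ≤ z m k y := by
  have hchoose :
      ((m + (k + 1)).choose (k + 1) : ℝ) * (k + 1) = (m + k + 1) * (m + k).choose k := by
    exact_mod_cast (Nat.add_one_mul_choose_eq (m + k) k).symm
  refine le_of_mul_le_mul_right ?_ (by positivity : (0 : ℝ) < k + 1)
  calc z m (k + 1) y * (k + 1) = (m + k).choose k * y ^ k * (y * (m + k + 1)) := by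
        rw [z]; linear_combination y ^ (k + 1) * hchoose
    _ ≤ (m + k).choose k * y ^ k * (k + 1) := by gcongr
    _ = z m k y * (k + 1) := rfl

theorem z_le_of_le {s r : ℕ} (hy₀ : 0 ≤ y) (hy₁ : y ≤ 1) (hys : y * (m + s + 1) ≤ s + 1)
    (hsr : s ≤ r) : z m r y ≤ z m s y := by
  induction r, hsr using Nat.le_induction with
  | base => exact le_rfl
  | succ k hsk ih =>
    refine (z_succ_le k hy₀ ?_).trans ih
    have hsk' : (s : ℝ) ≤ k := by exact_mod_cast hsk
    nlinarith [mul_nonneg (sub_nonneg.2 hy₁) (sub_nonneg.2 hsk')]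

theorem mRatio_le_one {s r : ℕ} (hy₀ : 0 ≤ y) (hy₁ : y ≤ 1) (hys : y * (m + s + 1) ≤ s + 1)
    (hsr : s ≤ r) : mRatio m r s y ≤ 1 :=
  div_le_one_of_le₀ (z_le_of_le hy₀ hy₁ hys hsr) (by unfold z; positivity)

theorem MKer_le_of_mem_Icc {s r : ℕ} (hm : 0 < m) (hsr : s + 1 ≤ r)
    (hy : y ∈ Set.Icc ((s : ℝ) / (m + s)) ((s + 1 : ℝ) / (m + s + 1))) :
    MKer m r s y ≤ m * (r - s) / ((m + r) * (m + s)) := by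
  obtain ⟨hy_lo, hy_hi⟩ := hy
  have hsr' : (s : ℝ) + 1 ≤ r := by exact_mod_cast hsr
  have hy₀ : 0 ≤ y := (by positivity : (0 : ℝ) ≤ s / (m + s)).trans hy_lo
  have hys : y * (m + s + 1) ≤ s + 1 := (le_div_iff₀ (by positivity)).1 hy_hi
  have hy_r : y ≤ r / (m + r) := by
    refine hy_hi.trans ((div_le_div_iff₀ (by positivity) (by positivity)).2 ?_)
    nlinarith
  calc MKer m r s y ≤ 1 * |(r : ℝ) / (m + r) - y| := by
        unfold MKer
        gcongr
        exact mRatio_le_one hy₀ (by nlinarith) hys (by omega)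
    _ ≤ r / (m + r) - s / (m + s) := by
        rw [one_mul, abs_of_nonneg (sub_nonneg.2 hy_r)]; linarith
    _ = m * (r - s) / ((m + r) * (m + s)) := by
        field_simp; ring

end Kernel

section Arithmetic

variable {m s r : ℝ}

theorem two_mul_le_of_sq_sub_le (hm : 4 ≤ m) (hs : 0 ≤ s)
    (h : (r - s) ^ 2 ≤ r + 1 + (s + 1) ^ 2 / m) : 2 * r ≤ 3 * s + 4 := by
  have hdiv : (s + 1) ^ 2 / m ≤ (s + 1) ^ 2 / 4 := by gcongr
  nlinarith

theorem mul_sq_le_of_two_mul_le (hm : 4 ≤ m) (hs : 1 ≤ s) (hsr : s + 1 ≤ r)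
    (hr : 2 * r ≤ 3 * s + 4) :
    (m * (r + 1) + (s + 1) ^ 2) * (m + s + 1) ^ 2 ≤ 16 * (m + r) ^ 2 * (m + s) * s := by
  have h₁ : m * (r + 1) + (s + 1) ^ 2 ≤ 5 * s * (m + s) := by nlinarith
  have h₂ : (m + s + 1) ^ 2 ≤ (m + r) ^ 2 := pow_le_pow_left₀ (by linarith) (by linarith) 2
  calc (m * (r + 1) + (s + 1) ^ 2) * (m + s + 1) ^ 2 ≤ 5 * s * (m + s) * (m + r) ^ 2 := by
        gcongr
    _ ≤ 16 * (m + r) ^ 2 * (m + s) * s := by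
        nlinarith [mul_nonneg (mul_nonneg (by linarith : 0 ≤ s) (by linarith : 0 ≤ m + s))
          (sq_nonneg (m + r))]

end Arithmetic

theorem rpow_le_mul_rpow_of_le_sq_mul {a b c t : ℝ} (ha : 0 ≤ a) (hb : 0 ≤ b) (hc : 1 ≤ c)
    (ht₀ : 0 ≤ t) (ht : t ≤ 1 / 2) (h : a ≤ c ^ 2 * b) : a ^ t ≤ c * b ^ t := by
  have hc₀ : 0 ≤ c := by linarith
  calc a ^ t ≤ (c ^ 2 * b) ^ t := by gcongr
    _ = c ^ (2 * t) * b ^ t := by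
        rw [mul_rpow (by positivity) hb, ← rpow_natCast_mul hc₀]; norm_num
    _ ≤ c ^ (1 : ℝ) * b ^ t := by gcongr; linarith
    _ = c * b ^ t := by rw [rpow_one]

section Bounds

variable {m s r t : ℝ}

theorem mul_sub_div_le_of_sub_le_rpow (hm : 4 ≤ m) (hs : 1 ≤ s) (hsr : s + 1 ≤ r)
    (ht₀ : 0 ≤ t) (ht : t ≤ 1 / 2) (h : r - s ≤ (r + 1 + (s + 1) ^ 2 / m) ^ t) :
    m * (r - s) / ((m + r) * (m + s)) ≤ 4 * (m * s / (m + s)) ^ t / (m + s + 1) := by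
  have hm₀ : 0 < m := by linarith
  have hs₀ : 0 < s := by linarith
  have hr₀ : 0 < r := by linarith
  set A := r + 1 + (s + 1) ^ 2 / m with hA_def
  set B := m * s / (m + s) with hB_def
  set C := 4 * (m + r) * (m + s) / (m * (m + s + 1)) with hC_def
  have hA : 1 ≤ A := by
    have : 0 ≤ (s + 1) ^ 2 / m := by positivity
    linarith
  have hsq : (r - s) ^ 2 ≤ A := by
    calc (r - s) ^ 2 ≤ (A ^ (1 / 2 : ℝ)) ^ 2 := by
          gcongr
          · linarith
          · exact h.trans (rpow_le_rpow_of_exponent_le hA ht)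
      _ = A := by rw [← sqrt_eq_rpow, sq_sqrt (by linarith)]
  have hAC : A ≤ C ^ 2 * B := by
    have hpoly := mul_sq_le_of_two_mul_le hm hs hsr (two_mul_le_of_sq_sub_le hm hs₀.le hsq)
    have hdiff : C ^ 2 * B - A = (16 * (m + r) ^ 2 * (m + s) * s
        - (m * (r + 1) + (s + 1) ^ 2) * (m + s + 1) ^ 2) / (m * (m + s + 1) ^ 2) := by
      simp only [hA_def, hB_def, hC_def]
      field_simp
      ring
    have : 0 ≤ C ^ 2 * B - A := by
      rw [hdiff]; apply div_nonneg (by linarith) (by positivity)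
    linarith
  have hC : 1 ≤ C := by
    rw [hC_def, le_div_iff₀ (by positivity)]
    nlinarith
  have hrs : r - s ≤ C * B ^ t :=
    h.trans (rpow_le_mul_rpow_of_le_sq_mul (by positivity) (by positivity) hC ht₀ ht hAC)
  have hCm : m * (m + s + 1) * C = 4 * (m + r) * (m + s) := by
    rw [hC_def]; field_simp
  rw [div_le_div_iff₀ (by positivity) (by positivity)]
  calc m * (r - s) * (m + s + 1) ≤ m * (m + s + 1) * (C * B ^ t) := by
        rw [mul_right_comm]; exact mul_le_mul_of_nonneg_left hrs (by positivity)
    _ = 4 * B ^ t * ((m + r) * (m + s)) := by rw [← mul_assoc, hCm]; ring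

theorem rpow_div_le_of_mem_Icc {y : ℝ} (hm : 0 < m) (hs : 0 ≤ s) (ht : 0 ≤ t)
    (hy : y ∈ Set.Icc (s / (m + s)) ((s + 1) / (m + s + 1))) :
    (m * s / (m + s)) ^ t / (m + s + 1) ≤ (1 - y) * y ^ t / m ^ (1 - t) := by
  obtain ⟨hy_lo, hy_hi⟩ := hy
  have hy₀ : 0 ≤ y := (by positivity : 0 ≤ s / (m + s)).trans hy_lo
  have hB : m * s / (m + s) ≤ y * m := by
    rw [mul_comm m, mul_div_right_comm]
    exact mul_le_mul_of_nonneg_right hy_lo hm.le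
  have h1y : 1 / (m + s + 1) ≤ (1 - y) / m := by
    rw [div_le_div_iff₀ (by positivity) hm]
    have := (le_div_iff₀ (by positivity : 0 < m + s + 1)).1 hy_hi
    linarith
  calc (m * s / (m + s)) ^ t / (m + s + 1) = (m * s / (m + s)) ^ t * (1 / (m + s + 1)) := by
        ring
    _ ≤ (y * m) ^ t * ((1 - y) / m) := by gcongr
    _ = (1 - y) * y ^ t / m ^ (1 - t) := by
        rw [mul_rpow hy₀ hm.le, rpow_sub hm, rpow_one]
        field_simp

end Bounds

theorem MKer_bound_right (m s α r : ℕ) (hm : 4 ≤ m) (hs : 1 ≤ s) (hα : 2 ≤ α)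
    (y : ℝ) (hy : y ∈ Set.Icc ((s : ℝ) / ((m : ℝ) + s)) (((s : ℝ) + 1) / ((m : ℝ) + s + 1)))
    (hr : s + 1 ≤ r)
    (hcond : (r : ℝ) - ((r : ℝ) + 1 + ((s : ℝ) + 1) ^ 2 / m) ^ ((1 : ℝ) / α) ≤ (s : ℝ)) :
    MKer m r s y ≤ 4 * (1 - y) * y ^ ((1 : ℝ) / α) / (m : ℝ) ^ (1 - (1 : ℝ) / α) := by
  have hα' : (2 : ℝ) ≤ α := by exact_mod_cast hα
  have ht₀ : (0 : ℝ) ≤ 1 / α := by positivity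
  have ht : (1 : ℝ) / α ≤ 1 / 2 := by gcongr
  calc MKer m r s y ≤ m * (r - s) / ((m + r) * (m + s)) := MKer_le_of_mem_Icc (by omega) hr hy
    _ ≤ 4 * ((m * s / (m + s)) ^ ((1 : ℝ) / α) / (m + s + 1)) := by
        rw [← mul_div_assoc]
        exact mul_sub_div_le_of_sub_le_rpow (by exact_mod_cast hm) (by exact_mod_cast hs)
          (by exact_mod_cast hr) ht₀ ht (by linarith)
    _ ≤ 4 * ((1 - y) * y ^ ((1 : ℝ) / α) / m ^ (1 - (1 : ℝ) / α)) :=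
        mul_le_mul_of_nonneg_left
          (rpow_div_le_of_mem_Icc (by positivity) (by positivity) ht₀ hy) (by norm_num)
    _ = 4 * (1 - y) * y ^ ((1 : ℝ) / α) / m ^ (1 - (1 : ℝ) / α) := by ring
end

section
/- Let m ≥ 4, s ≥ 1 and α ≥ 2 be integers, let y ∈ [s/(m+s), (s+1)/(m+s+1)], and let r be an integer with 0 ≤ r ≤ s satisfying s ≤ r + (r + s²/m)^{1/α}. Then M_{r,m,s}(y) ≤ 5·(1−y)·y^{1/α}/m^{1−1/α}. -/
lemma chooseA (m r : ℕ) (hr : 1 ≤ r) : ∀ d : ℕ,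
    (Nat.choose (m + r) r : ℝ) * (((m : ℝ) + r + d) / ((r : ℝ) + d)) ^ d
      ≤ Nat.choose (m + (r + d)) (r + d) := by
  intro d
  induction d with
  | zero => simp
  | succ d ih =>
    have hr1 : (1 : ℝ) ≤ (r : ℝ) := by exact_mod_cast hr
    have hrd : (0 : ℝ) < (r : ℝ) + d := by positivity
    have hrd1 : (0 : ℝ) < (r : ℝ) + d + 1 := by positivity
    have hq0 : (0 : ℝ) ≤ ((m : ℝ) + r + d + 1) / ((r : ℝ) + d + 1) := by positivity
    have hqle : ((m : ℝ) + r + d + 1) / ((r : ℝ) + d + 1) ≤ ((m : ℝ) + r + d) / ((r : ℝ) + d) := by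
      rw [div_le_div_iff₀ hrd1 hrd]
      nlinarith [Nat.cast_nonneg (α := ℝ) m]
    have key : (Nat.choose (m + (r + d) + 1) (r + d + 1) : ℝ) * ((r : ℝ) + d + 1)
        = ((m : ℝ) + r + d + 1) * Nat.choose (m + (r + d)) (r + d) := by
      have := Nat.add_one_mul_choose_eq (m + (r + d)) (r + d)
      have h2 : ((Nat.succ (m + (r + d)) * Nat.choose (m + (r + d)) (r + d) : ℕ) : ℝ)
          = ((Nat.choose (m + (r + d) + 1) (r + d + 1) * (r + d + 1) : ℕ) : ℝ) := by
        exact_mod_cast congrArg (Nat.cast (R := ℝ)) this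
      push_cast at h2
      linarith [h2]
    have step1 : (Nat.choose (m + r) r : ℝ) * (((m : ℝ) + r + ↑(d+1)) / ((r : ℝ) + ↑(d+1))) ^ (d+1)
        ≤ (Nat.choose (m + (r + d)) (r + d) : ℝ) * (((m : ℝ) + r + d + 1) / ((r : ℝ) + d + 1)) := by
      push_cast
      rw [show ((m:ℝ) + ↑r + (↑d + 1)) = (m:ℝ) + ↑r + ↑d + 1 by ring,
        show ((r:ℝ) + (↑d + 1)) = (r:ℝ) + ↑d + 1 by ring, pow_succ]
      have h1 : (Nat.choose (m + r) r : ℝ) * (((m : ℝ) + r + d + 1) / ((r : ℝ) + d + 1)) ^ d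
          ≤ Nat.choose (m + (r + d)) (r + d) := by
        calc (Nat.choose (m + r) r : ℝ) * (((m : ℝ) + r + d + 1) / ((r : ℝ) + d + 1)) ^ d
            ≤ (Nat.choose (m + r) r : ℝ) * (((m : ℝ) + r + d) / ((r : ℝ) + d)) ^ d := by
              apply mul_le_mul_of_nonneg_left (pow_le_pow_left₀ hq0 hqle d) (by positivity)
          _ ≤ _ := ih
      calc (Nat.choose (m + r) r : ℝ) * ((((m : ℝ) + r + d + 1) / ((r : ℝ) + d + 1)) ^ d
              * (((m : ℝ) + r + d + 1) / ((r : ℝ) + d + 1)))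
          = ((Nat.choose (m + r) r : ℝ) * (((m : ℝ) + r + d + 1) / ((r : ℝ) + d + 1)) ^ d)
              * (((m : ℝ) + r + d + 1) / ((r : ℝ) + d + 1)) := by ring
        _ ≤ _ := mul_le_mul_of_nonneg_right h1 hq0
    refine step1.trans ?_
    rw [show m + (r + (d+1)) = m + (r + d) + 1 by ring, show r + (d + 1) = r + d + 1 by ring]
    rw [← mul_div_assoc, div_le_iff₀ hrd1]
    linarith [key]

lemma mRatio_le_one_s10 (m r s : ℕ) (hm : 1 ≤ m) (hr : 1 ≤ r) (hrs : r ≤ s) (y : ℝ)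
    (hy : (s : ℝ) / ((m : ℝ) + s) ≤ y) : mRatio m r s y ≤ 1 := by
  have hms : (0 : ℝ) < (m : ℝ) + s := by
    have h1 : (1:ℝ) ≤ (m:ℝ) := by exact_mod_cast hm
    have h2 : (0:ℝ) ≤ (s:ℝ) := Nat.cast_nonneg s
    linarith
  have hs1 : (1:ℝ) ≤ (s:ℝ) := by exact_mod_cast hr.trans hrs
  have hy0 : 0 < y := lt_of_lt_of_le (by positivity) hy
  obtain ⟨d, rfl⟩ : ∃ d, s = r + d := ⟨s - r, (Nat.add_sub_cancel' hrs).symm⟩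
  have hzs : 0 < z m (r + d) y := by
    have h1 : 0 < (Nat.choose (m + (r + d)) (r + d) : ℝ) := by
      exact_mod_cast Nat.choose_pos (Nat.le_add_left _ _)
    have : 0 < y ^ (r + d) := pow_pos hy0 _
    unfold z; positivity
  rw [mRatio, div_le_one hzs]
  unfold z
  have hQ : (((m : ℝ) + ↑(r+d)) / (↑(r+d) : ℝ)) * ((↑(r+d) : ℝ) / ((m : ℝ) + ↑(r+d))) = 1 := by
    have h1 : (0:ℝ) < (↑(r+d) : ℝ) := by
      have : 1 ≤ r + d := hr.trans (Nat.le_add_right _ _)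
      exact_mod_cast this
    have h2 : (0:ℝ) < (m : ℝ) + ↑(r+d) := by push_cast; push_cast at hms; linarith
    field_simp
  have hyd : ((↑(r+d) : ℝ) / ((m : ℝ) + ↑(r+d))) ^ d ≤ y ^ d := by
    apply pow_le_pow_left₀ (by positivity) _ d
    push_cast at hy ⊢; exact hy
  have hA := chooseA m r hr d
  have key : (Nat.choose (m + r) r : ℝ) ≤ (Nat.choose (m + (r + d)) (r + d) : ℝ) * y ^ d := by
    calc (Nat.choose (m + r) r : ℝ)
        = (Nat.choose (m + r) r : ℝ) * ((((m : ℝ) + r + d) / ((r : ℝ) + d)) ^ d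
            * (((↑(r+d) : ℝ)) / ((m : ℝ) + ↑(r+d))) ^ d) := by
          rw [← mul_pow]
          push_cast
          rw [show ((m:ℝ) + (↑r + ↑d)) = (m:ℝ) + ↑r + ↑d by ring]
          push_cast at hQ
          rw [show ((m:ℝ) + (↑r + ↑d)) = (m:ℝ) + ↑r + ↑d by ring] at hQ
          rw [hQ, one_pow, mul_one]
      _ = ((Nat.choose (m + r) r : ℝ) * (((m : ℝ) + r + d) / ((r : ℝ) + d)) ^ d)
            * (((↑(r+d) : ℝ)) / ((m : ℝ) + ↑(r+d))) ^ d := by ring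
      _ ≤ (Nat.choose (m + (r + d)) (r + d) : ℝ) * (((↑(r+d) : ℝ)) / ((m : ℝ) + ↑(r+d))) ^ d :=
          mul_le_mul_of_nonneg_right hA (by positivity)
      _ ≤ _ := mul_le_mul_of_nonneg_left hyd (Nat.cast_nonneg _)
  calc (Nat.choose (m + r) r : ℝ) * y ^ r
      ≤ ((Nat.choose (m + (r + d)) (r + d) : ℝ) * y ^ d) * y ^ r :=
        mul_le_mul_of_nonneg_right key (by positivity)
    _ = (Nat.choose (m + (r + d)) (r + d) : ℝ) * y ^ (r + d) := by
        rw [pow_add]; ring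

lemma rpow_aux (α : ℕ) (hα : α ≠ 0) {t X : ℝ} (hX : 0 ≤ X) (ht : 0 ≤ t)
    (h : t ≤ X ^ ((1 : ℝ) / α)) : t ^ α ≤ X := by
  have h1 : t ^ α ≤ (X ^ ((1 : ℝ) / α)) ^ α := pow_le_pow_left₀ ht h α
  have h2 : (X ^ ((1 : ℝ) / α)) ^ α = X := by
    rw [← Real.rpow_natCast (X ^ ((1 : ℝ) / α)) α, ← Real.rpow_mul hX]
    rw [one_div, inv_mul_cancel₀ (by exact_mod_cast hα), Real.rpow_one]
  linarith

lemma rpow_aux2 (α : ℕ) (hα : α ≠ 0) {t X : ℝ} (ht : 0 ≤ t)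
    (h : t ^ α ≤ X) : t ≤ X ^ ((1 : ℝ) / α) := by
  have h1 : (t ^ α) ^ ((1:ℝ)/α) ≤ X ^ ((1:ℝ)/α) :=
    Real.rpow_le_rpow (by positivity) h (by positivity)
  have h2 : (t ^ α) ^ ((1:ℝ)/α) = t := by
    rw [← Real.rpow_natCast t α, ← Real.rpow_mul ht]
    rw [mul_one_div, div_self (by exact_mod_cast hα), Real.rpow_one]
  linarith

set_option maxHeartbeats 1000000 in
theorem MKer_bound_left (m s α r : ℕ) (hm : 4 ≤ m) (hs : 1 ≤ s) (hα : 2 ≤ α)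
    (y : ℝ) (hy : y ∈ Set.Icc ((s : ℝ) / ((m : ℝ) + s)) (((s : ℝ) + 1) / ((m : ℝ) + s + 1)))
    (hrs : r ≤ s)
    (hcond : (s : ℝ) ≤ (r : ℝ) + ((r : ℝ) + (s : ℝ) ^ 2 / m) ^ ((1 : ℝ) / α)) :
    MKer m r s y ≤ 5 * (1 - y) * y ^ ((1 : ℝ) / α) / (m : ℝ) ^ (1 - (1 : ℝ) / α) := by
  obtain ⟨hy1, hy2⟩ := hy
  have hα0 : α ≠ 0 := by omega
  have hm' : (4:ℝ) ≤ (m:ℝ) := by exact_mod_cast hm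
  have hs' : (1:ℝ) ≤ (s:ℝ) := by exact_mod_cast hs
  have hrs' : (r:ℝ) ≤ (s:ℝ) := by exact_mod_cast hrs
  have hm0 : (0:ℝ) < (m:ℝ) := by linarith
  have hms : (0:ℝ) < (m:ℝ) + s := by linarith
  have hms1 : (0:ℝ) < (m:ℝ) + s + 1 := by linarith
  have hy0 : 0 < y := lt_of_lt_of_le (by positivity) hy1
  have hylt : y < 1 := lt_of_le_of_lt hy2 (by rw [div_lt_one hms1]; linarith)
  have hXnn : (0:ℝ) ≤ (r:ℝ) + (s:ℝ)^2/m := by positivity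
  -- r ≥ 1
  have hr1 : 1 ≤ r := by
    by_contra h
    push_neg at h
    interval_cases r
    simp only [Nat.cast_zero, zero_add] at hcond
    have h1 : (s:ℝ)^α ≤ (s:ℝ)^2/m := rpow_aux α hα0 (by positivity) (by positivity) hcond
    have h2 : (s:ℝ)^2 ≤ (s:ℝ)^α := pow_le_pow_right₀ hs' hα
    have h3 : (m:ℝ)*((s:ℝ)^2) ≤ (m:ℝ)*((s:ℝ)^2/m) :=
      mul_le_mul_of_nonneg_left (h2.trans h1) (le_of_lt hm0)
    have h4 : (m:ℝ)*((s:ℝ)^2/m) = (s:ℝ)^2 := by field_simp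
    have h5 : (4:ℝ)*(s:ℝ)^2 ≤ (m:ℝ)*(s:ℝ)^2 := mul_le_mul_of_nonneg_right hm' (sq_nonneg (s:ℝ))
    have h6 : (1:ℝ) ≤ (s:ℝ)^2 := by nlinarith
    linarith
  have hr' : (1:ℝ) ≤ (r:ℝ) := by exact_mod_cast hr1
  have hmr : (0:ℝ) < (m:ℝ) + r := by linarith
  -- D^α bound
  have hDα : ((s:ℝ) - r)^α ≤ (r:ℝ) + (s:ℝ)^2/m :=
    rpow_aux α hα0 hXnn (by linarith) (by linarith)
  have key2 : (m:ℝ) * ((s:ℝ)-r)^2 ≤ (m:ℝ)*r + (s:ℝ)^2 := by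
    rcases eq_or_lt_of_le hrs' with h|h
    · rw [← h]; nlinarith
    · have hD1 : (1:ℝ) ≤ (s:ℝ) - r := by
        have h1 : r < s := by exact_mod_cast h
        have h2 : (r:ℝ) + 1 ≤ (s:ℝ) := by exact_mod_cast h1
        linarith
      have hD2 : ((s:ℝ)-r)^2 ≤ ((s:ℝ)-r)^α := pow_le_pow_right₀ hD1 hα
      have h2 : ((s:ℝ)-r)^2 ≤ (r:ℝ) + (s:ℝ)^2/m := le_trans hD2 hDα
      have h3 := mul_le_mul_of_nonneg_left h2 (le_of_lt hm0)
      have h4 : (m:ℝ) * ((s:ℝ)^2/m) = (s:ℝ)^2 := by field_simp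
      nlinarith [h3]
  -- s ≤ 4r
  have hs4r : (s:ℝ) ≤ 4*(r:ℝ) := by
    by_contra hcon
    push_neg at hcon
    have hS0 : (0:ℝ) < (s:ℝ) := by linarith
    have a1 : (m:ℝ)*(4*(r:ℝ)) < (m:ℝ)*(s:ℝ) := mul_lt_mul_of_pos_left hcon hm0
    have a2 : ((m:ℝ)*(4*(r:ℝ)))*(s:ℝ) < ((m:ℝ)*(s:ℝ))*(s:ℝ) := mul_lt_mul_of_pos_right a1 hS0
    have a3 : (4:ℝ)*(s:ℝ)^2 ≤ (m:ℝ)*(s:ℝ)^2 := mul_le_mul_of_nonneg_right hm' (sq_nonneg (s:ℝ))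
    have a4 : (0:ℝ) ≤ (m:ℝ)*(r:ℝ)^2 := by positivity
    have h9 : (s:ℝ) ≤ (s:ℝ)^2 := by nlinarith
    have a5 : (m:ℝ)*(s:ℝ) ≤ (m:ℝ)*(s:ℝ)^2 := mul_le_mul_of_nonneg_left h9 (le_of_lt hm0)
    have e1 : (m:ℝ)*((s:ℝ)-r)^2 = (m:ℝ)*(s:ℝ)^2 - 2*((m:ℝ)*(r:ℝ)*(s:ℝ)) + (m:ℝ)*(r:ℝ)^2 := by ring
    have e2 : ((m:ℝ)*(4*(r:ℝ)))*(s:ℝ) = 4*((m:ℝ)*(r:ℝ)*(s:ℝ)) := by ring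
    have e3 : (m:ℝ)*(4*(r:ℝ)) = 4*((m:ℝ)*(r:ℝ)) := by ring
    rw [e1] at key2
    rw [e2] at a2
    rw [e3] at a1
    linarith
  -- the rpow quantity
  have hmy0 : 0 < (m:ℝ)*y := by positivity
  set A : ℝ := ((m:ℝ)*y) ^ ((1:ℝ)/α) with hA
  have hA0 : 0 < A := Real.rpow_pos_of_pos hmy0 _
  have hmy1 : (m:ℝ)/((m:ℝ)+1) ≤ (m:ℝ)*y := by
    have h1 : (1:ℝ)/((m:ℝ)+1) ≤ (s:ℝ)/((m:ℝ)+s) := by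
      rw [div_le_div_iff₀ (by linarith) hms]
      nlinarith
    have h2 : (1:ℝ)/((m:ℝ)+1) ≤ y := le_trans h1 hy1
    calc (m:ℝ)/((m:ℝ)+1) = (m:ℝ)*((1:ℝ)/((m:ℝ)+1)) := by ring
      _ ≤ (m:ℝ)*y := mul_le_mul_of_nonneg_left h2 (le_of_lt hm0)
  have hAgeo : (m:ℝ)/((m:ℝ)+1) ≤ A := by
    rcases le_total ((m:ℝ)*y) 1 with h|h
    · have h1 : ((m:ℝ)*y) ^ (1:ℝ) ≤ A :=
        Real.rpow_le_rpow_of_exponent_ge hmy0 h (by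
          rw [div_le_one (by exact_mod_cast (by omega : 0 < α))]
          exact_mod_cast (by omega : 1 ≤ α))
      rw [Real.rpow_one] at h1
      linarith
    · have h1 : (1:ℝ) ≤ A := Real.one_le_rpow h (by positivity)
      have h2 : (m:ℝ)/((m:ℝ)+1) ≤ 1 := by
        rw [div_le_one (by linarith)]; linarith
      linarith
  have ha : (m:ℝ) ≤ A * ((m:ℝ)+r) := by
    calc (m:ℝ) = ((m:ℝ)/((m:ℝ)+1)) * ((m:ℝ)+1) := by field_simp
      _ ≤ A * ((m:ℝ)+r) := mul_le_mul hAgeo (by linarith) (by linarith) (le_of_lt hA0)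
  have hb : (m:ℝ) * ((s:ℝ)-r) ≤ 4 * A * ((m:ℝ)+r) := by
    set B : ℝ := 4*((m:ℝ)+r)/(m:ℝ) with hB
    have hB1 : (1:ℝ) ≤ B := by
      rw [hB, le_div_iff₀ hm0]; linarith
    have hB0 : (0:ℝ) ≤ B := by linarith
    have sub1 : (r:ℝ) + (s:ℝ)^2/m ≤ B^2 * ((m:ℝ)*y) := by
      have key : ((r:ℝ)*m + (s:ℝ)^2)*((m:ℝ)+s) ≤ 16*((m:ℝ)+r)^2*(s:ℝ) := by
        nlinarith [sq_nonneg ((m:ℝ)+s), mul_le_mul_of_nonneg_right hrs' hm0.le,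
          mul_le_mul_of_nonneg_left hs4r hms.le, sq_nonneg ((m:ℝ)+r)]
      have hstep : (r:ℝ) + (s:ℝ)^2/m ≤ 16*((m:ℝ)+r)^2*((s:ℝ)/((m:ℝ)+s))/m := by
        rw [← sub_nonneg]
        have expand : 16*((m:ℝ)+r)^2*((s:ℝ)/((m:ℝ)+s))/m - ((r:ℝ) + (s:ℝ)^2/m)
            = (16*((m:ℝ)+r)^2*(s:ℝ) - ((r:ℝ)*m + (s:ℝ)^2)*((m:ℝ)+s)) / (((m:ℝ)+s)*m) := by
          field_simp
        rw [expand]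
        apply div_nonneg (by linarith) (by positivity)
      have hstep2 : 16*((m:ℝ)+r)^2*((s:ℝ)/((m:ℝ)+s))/m ≤ B^2 * ((m:ℝ)*y) := by
        have hBe : B^2 * ((m:ℝ)*y) = 16*((m:ℝ)+r)^2*y/m := by
          rw [hB]; field_simp; ring
        rw [hBe]
        gcongr
      linarith
    have sub2 : B^2 * ((m:ℝ)*y) ≤ B^α * ((m:ℝ)*y) :=
      mul_le_mul_of_nonneg_right (pow_le_pow_right₀ hB1 hα) hmy0.le
    have hD : (s:ℝ) - r ≤ (B^α * ((m:ℝ)*y)) ^ ((1:ℝ)/α) := by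
      apply rpow_aux2 α hα0 (by linarith)
      calc ((s:ℝ)-r)^α ≤ (r:ℝ) + (s:ℝ)^2/m := hDα
        _ ≤ B^2 * ((m:ℝ)*y) := sub1
        _ ≤ B^α * ((m:ℝ)*y) := sub2
    have hsplit : (B^α * ((m:ℝ)*y)) ^ ((1:ℝ)/α) = B * A := by
      rw [Real.mul_rpow (pow_nonneg hB0 α) hmy0.le, ← Real.rpow_natCast B α,
        ← Real.rpow_mul hB0, mul_one_div, div_self (by exact_mod_cast hα0), Real.rpow_one]
    rw [hsplit] at hD
    have h5 := mul_le_mul_of_nonneg_left hD hm0.le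
    have hmB : (m:ℝ)*(B*A) = 4*A*((m:ℝ)+r) := by
      rw [hB]; field_simp
    rw [hmB] at h5
    linarith
  -- combine: (s - r + 1) * m ≤ 5 * A * (m + r)
  have hcomb : ((s:ℝ) - r + 1) * (m:ℝ) ≤ 5 * A * ((m:ℝ)+r) := by linarith [ha, hb]
  -- step (i): MKer ≤ y - r/(m+r)
  have habs : |(r:ℝ)/((m:ℝ)+r) - y| = y - (r:ℝ)/((m:ℝ)+r) := by
    have h1 : (r:ℝ)/((m:ℝ)+r) ≤ (s:ℝ)/((m:ℝ)+s) := by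
      rw [div_le_div_iff₀ hmr hms]
      nlinarith
    rw [abs_of_nonpos (by linarith [le_trans h1 hy1])]
    ring
  have hi : MKer m r s y ≤ y - (r:ℝ)/((m:ℝ)+r) := by
    rw [MKer, habs]
    calc mRatio m r s y * (y - (r:ℝ)/((m:ℝ)+r))
        ≤ 1 * (y - (r:ℝ)/((m:ℝ)+r)) := by
          apply mul_le_mul_of_nonneg_right
            (mRatio_le_one_s10 m r s (by omega) hr1 hrs y hy1)
          have h1 : (r:ℝ)/((m:ℝ)+r) ≤ (s:ℝ)/((m:ℝ)+s) := by
            rw [div_le_div_iff₀ hmr hms]; nlinarith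
          linarith [le_trans h1 hy1]
      _ = y - (r:ℝ)/((m:ℝ)+r) := one_mul _
  -- step (ii)
  have h2y : y*((m:ℝ)+s+1) ≤ (s:ℝ)+1 := by
    rw [le_div_iff₀ hms1] at hy2
    linarith
  have hii : y - (r:ℝ)/((m:ℝ)+r) ≤ (1-y)*((s:ℝ)-r+1)/((m:ℝ)+r) := by
    rw [← sub_nonneg]
    have expand : (1-y)*((s:ℝ)-r+1)/((m:ℝ)+r) - (y - (r:ℝ)/((m:ℝ)+r))
        = ((1-y)*((s:ℝ)-r+1) - (y*((m:ℝ)+r) - r))/((m:ℝ)+r) := by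
      field_simp
    rw [expand]
    apply div_nonneg _ hmr.le
    nlinarith [h2y]
  -- step (iii)
  have hiii : (1-y)*((s:ℝ)-r+1)/((m:ℝ)+r) ≤ 5*(1-y)*A/(m:ℝ) := by
    rw [← sub_nonneg]
    have expand : 5*(1-y)*A/(m:ℝ) - (1-y)*((s:ℝ)-r+1)/((m:ℝ)+r)
        = (1-y) * (5*A*((m:ℝ)+r) - ((s:ℝ)-r+1)*(m:ℝ)) / ((m:ℝ)*((m:ℝ)+r)) := by
      field_simp
    rw [expand]
    apply div_nonneg (mul_nonneg (by linarith) (by linarith [hcomb])) (by positivity)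
  -- rewrite RHS
  have hrhs : 5 * (1 - y) * y ^ ((1 : ℝ) / α) / (m : ℝ) ^ (1 - (1 : ℝ) / α)
      = 5*(1-y)*A/(m:ℝ) := by
    rw [hA, Real.mul_rpow hm0.le hy0.le, Real.rpow_sub hm0, Real.rpow_one]
    rw [div_div_eq_mul_div]
    ring
  rw [hrhs]
  linarith [hi, hii, hiii]
end

section
/- Let m ≥ 4 and α ≥ 2 be integers. Then for every y ∈ [0,1), (m + y − 1)·[ (m + y − 1)·(1−y)^{2/α − 1} + 4^{1/α}·(m·y)^{1/α} ] ≥ m²/2. -/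
theorem psi_lower_bound (m α : ℕ) (hm : 4 ≤ m) (hα : 2 ≤ α)
    (y : ℝ) (hy : y ∈ Set.Ico (0 : ℝ) 1) :
    (m : ℝ) ^ 2 / 2 ≤
      ((m : ℝ) + y - 1) *
        (((m : ℝ) + y - 1) * (1 - y) ^ ((2 : ℝ) / α - 1) +
          (4 : ℝ) ^ ((1 : ℝ) / α) * ((m : ℝ) * y) ^ ((1 : ℝ) / α)) := by
  obtain ⟨hy0, hy1⟩ := hy
  have hm4 : (4 : ℝ) ≤ (m : ℝ) := by exact_mod_cast hm
  have hα2 : (2 : ℝ) ≤ (α : ℝ) := by exact_mod_cast hα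
  have hb : ((m : ℝ) + y - 1) ≥ 3 := by linarith
  have hexp : (2 : ℝ) / α - 1 ≤ 0 := by
    have : (2 : ℝ) / α ≤ 1 := by
      rw [div_le_one (by linarith)]; linarith
    linarith
  have hr : (1 : ℝ) ≤ (1 - y) ^ ((2 : ℝ) / α - 1) :=
    Real.one_le_rpow_of_pos_of_le_one_of_nonpos (by linarith) (by linarith) hexp
  have hs : 0 ≤ (4 : ℝ) ^ ((1 : ℝ) / α) * ((m : ℝ) * y) ^ ((1 : ℝ) / α) :=
    mul_nonneg (Real.rpow_nonneg (by norm_num) _)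
      (Real.rpow_nonneg (mul_nonneg (by linarith) hy0) _)
  have key : ((m : ℝ) + y - 1) * (((m : ℝ) + y - 1) * 1) ≤
      ((m : ℝ) + y - 1) *
        (((m : ℝ) + y - 1) * (1 - y) ^ ((2 : ℝ) / α - 1) +
          (4 : ℝ) ^ ((1 : ℝ) / α) * ((m : ℝ) * y) ^ ((1 : ℝ) / α)) := by
    apply mul_le_mul_of_nonneg_left _ (by linarith)
    have := mul_le_mul_of_nonneg_left hr (show (0:ℝ) ≤ (m : ℝ) + y - 1 by linarith)
    linarith
  nlinarith [key, sq_nonneg ((m : ℝ) + y - 1), sq_nonneg y]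
end

section
/- Let m ≥ 4 and α ≥ 2 be integers. Then for every y ∈ [0,1), m·(1−y)^{2/α − 1} − (m·y)^{1/α} − (1−y)^{2/α} ≥ m/2. -/
theorem lambda_lower_bound (m α : ℕ) (hm : 4 ≤ m) (hα : 2 ≤ α)
    (y : ℝ) (hy : y ∈ Set.Ico (0 : ℝ) 1) :
    (m : ℝ) / 2 ≤
      (m : ℝ) * (1 - y) ^ ((2 : ℝ) / α - 1) - ((m : ℝ) * y) ^ ((1 : ℝ) / α) -
        (1 - y) ^ ((2 : ℝ) / α) := by
  obtain ⟨hy0, hy1⟩ := hy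
  have hm' : (4 : ℝ) ≤ m := by exact_mod_cast hm
  have hα' : (2 : ℝ) ≤ α := by exact_mod_cast hα
  have hαpos : (0 : ℝ) < α := by linarith
  have ht0 : (0 : ℝ) < 1 - y := by linarith
  have ht1 : (1 : ℝ) - y ≤ 1 := by linarith
  have hexp : (2 : ℝ) / α - 1 ≤ 0 := by
    have : (2 : ℝ) / α ≤ 1 := by rw [div_le_one hαpos]; linarith
    linarith
  have hP : 1 ≤ (1 - y) ^ ((2 : ℝ) / α - 1) :=
    Real.one_le_rpow_of_pos_of_le_one_of_nonpos ht0 ht1 hexp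
  have hsplit : (1 - y) ^ ((2 : ℝ) / α) = (1 - y) ^ ((2 : ℝ) / α - 1) * (1 - y) := by
    have h2 : (2 : ℝ) / α = ((2 : ℝ) / α - 1) + 1 := by ring
    rw [h2, Real.rpow_add_one ht0.ne']; ring_nf
  have hkey : ((m : ℝ) * y) ^ ((1 : ℝ) / α) ≤ (m : ℝ) / 2 - 1 + y := by
    rcases le_or_gt ((m : ℝ) * y) 1 with h1 | h1
    · have h2 : ((m : ℝ) * y) ^ ((1 : ℝ) / α) ≤ 1 :=
        Real.rpow_le_one (mul_nonneg (by linarith) hy0) h1 (by positivity)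
      linarith
    · have h12 : (1 : ℝ) / α ≤ 1 / 2 := one_div_le_one_div_of_le (by norm_num) hα'
      have hle : ((m : ℝ) * y) ^ ((1 : ℝ) / α) ≤ ((m : ℝ) * y) ^ ((1 : ℝ) / 2) :=
        Real.rpow_le_rpow_of_exponent_le h1.le h12
      have hs : ((m : ℝ) * y) ^ ((1 : ℝ) / 2) = Real.sqrt ((m : ℝ) * y) :=
        (Real.sqrt_eq_rpow _).symm
      have hineq : (m : ℝ) * y ≤ ((m : ℝ) / 2 - 1 + y) ^ 2 := by
        nlinarith [sq_nonneg (y - 1), mul_nonneg (by linarith : (0:ℝ) ≤ (m:ℝ))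
          (by linarith : (0:ℝ) ≤ (m:ℝ) - 4)]
      have hsq : Real.sqrt ((m : ℝ) * y) ≤ (m : ℝ) / 2 - 1 + y := by
        calc Real.sqrt ((m : ℝ) * y) ≤ Real.sqrt (((m : ℝ) / 2 - 1 + y) ^ 2) :=
              Real.sqrt_le_sqrt hineq
          _ = (m : ℝ) / 2 - 1 + y := Real.sqrt_sq (by linarith)
      linarith [hs ▸ hle]
  have hfin : (m : ℝ) - (1 - y) ≤ ((m : ℝ) - (1 - y)) * (1 - y) ^ ((2 : ℝ) / α - 1) :=
    le_mul_of_one_le_right (by linarith) hP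
  rw [hsplit]
  nlinarith [hfin, hkey]
end

section
/- Let J ⊆ ℝ be an interval and let L be an operator mapping nonnegative bounded continuous functions on J to nonnegative functions on J which is monotone (g ≤ h pointwise implies L(g) ≤ L(h) pointwise), sublinear (L(g+h)(y) ≤ L(g)(y) + L(h)(y) for all y), positively homogeneous (L(c·g) = c·L(g) for all c ≥ 0), and satisfies L(e₀) = e₀ where e₀ is the constant function 1. Then for every nonnegative bounded continuous g on J, every δ > 0 and every y ∈ J, |g(y) − L(g)(y)| ≤ (1 + (1/δ)·L(φ_y)(y)) · ω(g, δ), where φ_y(t) = |t − y|. -/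
/-- `g` is a nonnegative bounded continuous function on `J`. -/
def NonnegBddCont (J : Set ℝ) (g : ℝ → ℝ) : Prop :=
  ContinuousOn g J ∧ (∀ x ∈ J, 0 ≤ g x) ∧ ∃ C : ℝ, ∀ x ∈ J, g x ≤ C

/-- The modulus of continuity of `g` on `J`. -/
noncomputable def omegaMod (J : Set ℝ) (g : ℝ → ℝ) (δ : ℝ) : ℝ :=
  sSup {d : ℝ | ∃ x q : ℝ, x ∈ J ∧ q ∈ J ∧ |x - q| ≤ δ ∧ d = |g x - g q|}

/-!
Chaining points at most `δ` apart across the interval gives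
`|g x - g y| ≤ ω(g, δ) + (ω(g, δ) / δ) * |x - y|`, i.e. `g` is squeezed between
`g y ∓ (ω + (ω / δ) φ_y)`. Applying `L`, which is monotone, subadditive, positively homogeneous and
fixes constants, to both sides of these two inequalities bounds `L g y - g y` from above and below.
-/

namespace NonnegBddCont

variable {J : Set ℝ} {f g : ℝ → ℝ} {c : ℝ}

theorem const (hc : 0 ≤ c) : NonnegBddCont J fun _ => c :=
  ⟨continuousOn_const, fun _ _ => hc, c, fun _ _ => le_rfl⟩

theorem add (hf : NonnegBddCont J f) (hg : NonnegBddCont J g) : NonnegBddCont J (f + g) := by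
  obtain ⟨hfc, hf0, Cf, hCf⟩ := hf
  obtain ⟨hgc, hg0, Cg, hCg⟩ := hg
  exact ⟨hfc.add hgc, fun x hx => add_nonneg (hf0 x hx) (hg0 x hx), Cf + Cg,
    fun x hx => add_le_add (hCf x hx) (hCg x hx)⟩

theorem const_mul (hg : NonnegBddCont J g) (hc : 0 ≤ c) : NonnegBddCont J fun t => c * g t := by
  obtain ⟨hgc, hg0, C, hC⟩ := hg
  exact ⟨continuousOn_const.mul hgc, fun x hx => mul_nonneg hc (hg0 x hx), c * C,
    fun x hx => mul_le_mul_of_nonneg_left (hC x hx) hc⟩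

theorem exists_abs_le (hg : NonnegBddCont J g) : ∃ C, ∀ x ∈ J, |g x| ≤ C := by
  obtain ⟨-, hg0, C, hC⟩ := hg
  exact ⟨C, fun x hx => (abs_of_nonneg (hg0 x hx)).trans_le (hC x hx)⟩

end NonnegBddCont

theorem abs_sub_le_omegaMod {J : Set ℝ} {g : ℝ → ℝ} {δ x q : ℝ}
    (hbdd : ∃ C, ∀ x ∈ J, |g x| ≤ C) (hx : x ∈ J) (hq : q ∈ J) (hxq : |x - q| ≤ δ) :
    |g x - g q| ≤ omegaMod J g δ := by
  obtain ⟨C, hC⟩ := hbdd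
  refine le_csSup ⟨C + C, ?_⟩ ⟨x, q, hx, hq, hxq, rfl⟩
  rintro d ⟨a, b, ha, hb, -, rfl⟩
  exact (abs_sub _ _).trans (add_le_add (hC a ha) (hC b hb))

namespace Set.OrdConnected

variable {J : Set ℝ} {g : ℝ → ℝ} {δ ω : ℝ}

theorem abs_sub_le_nat_mul (hJ : J.OrdConnected) (hδ : 0 ≤ δ)
    (hω : ∀ a ∈ J, ∀ b ∈ J, |a - b| ≤ δ → |g a - g b| ≤ ω) (n : ℕ) {x q : ℝ}
    (hx : x ∈ J) (hq : q ∈ J) (hqx : q ≤ x) (hxq : x - q ≤ n * δ) :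
    |g x - g q| ≤ n * ω := by
  induction n generalizing x with
  | zero =>
    obtain rfl : x = q := le_antisymm (by simpa using hxq) hqx
    simp
  | succ n ih =>
    have hω0 : 0 ≤ ω := (abs_nonneg _).trans (hω q hq q hq (by simpa using hδ))
    push_cast at hxq ⊢
    by_cases hnear : x - q ≤ δ
    · have := hω x hx q hq (by rwa [abs_of_nonneg (sub_nonneg.2 hqx)])
      nlinarith [n.cast_nonneg (α := ℝ)]
    · have hp : x - δ ∈ J := hJ.out hq hx ⟨by linarith, by linarith⟩
      calc |g x - g q| ≤ |g x - g (x - δ)| + |g (x - δ) - g q| := abs_sub_le _ _ _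
        _ ≤ ω + n * ω := by
          gcongr
          · exact hω x hx _ hp (by simp [abs_of_nonneg hδ])
          · exact ih hp (by linarith) (by linarith)
        _ = (n + 1) * ω := by ring

theorem abs_sub_le_one_add_div_mul (hJ : J.OrdConnected) (hδ : 0 < δ)
    (hω : ∀ a ∈ J, ∀ b ∈ J, |a - b| ≤ δ → |g a - g b| ≤ ω) {x y : ℝ}
    (hx : x ∈ J) (hy : y ∈ J) :
    |g x - g y| ≤ (1 + |x - y| / δ) * ω := by
  have hω0 : 0 ≤ ω := (abs_nonneg _).trans (hω y hy y hy (by simpa using hδ.le))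
  set n := ⌈|x - y| / δ⌉₊
  have hn : |x - y| ≤ n * δ := (div_le_iff₀ hδ).1 (Nat.le_ceil _)
  have hn' : (n : ℝ) ≤ 1 + |x - y| / δ := by
    linarith [Nat.ceil_lt_add_one (div_nonneg (abs_nonneg (x - y)) hδ.le)]
  refine le_trans ?_ (mul_le_mul_of_nonneg_right hn' hω0)
  rcases le_total y x with hyx | hxy
  · rw [abs_of_nonneg (sub_nonneg.2 hyx)] at hn
    exact hJ.abs_sub_le_nat_mul hδ.le hω n hx hy hyx hn
  · rw [abs_sub_comm] at hn ⊢
    rw [abs_of_nonneg (sub_nonneg.2 hxy)] at hn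
    exact hJ.abs_sub_le_nat_mul hδ.le hω n hy hx hxy hn

end Set.OrdConnected

structure IsMonotoneSublinear (J : Set ℝ) (L : (ℝ → ℝ) → ℝ → ℝ) : Prop where
  mono : ∀ f g, NonnegBddCont J f → NonnegBddCont J g →
    (∀ x ∈ J, f x ≤ g x) → ∀ y ∈ J, L f y ≤ L g y
  add_le : ∀ f g, NonnegBddCont J f → NonnegBddCont J g →
    ∀ y ∈ J, L (f + g) y ≤ L f y + L g y
  const_mul : ∀ c : ℝ, 0 ≤ c → ∀ g, NonnegBddCont J g →
    ∀ y ∈ J, L (fun t => c * g t) y = c * L g y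
  map_one : ∀ y ∈ J, L (fun _ => (1 : ℝ)) y = 1

namespace IsMonotoneSublinear

variable {J : Set ℝ} {L : (ℝ → ℝ) → ℝ → ℝ} {f g φ : ℝ → ℝ} {a b y : ℝ}

theorem apply_const (hL : IsMonotoneSublinear J L) (ha : 0 ≤ a) (hy : y ∈ J) :
    L (fun _ => a) y = a := by
  simpa [hL.map_one y hy] using hL.const_mul a ha _ (NonnegBddCont.const zero_le_one) y hy

theorem apply_le_apply_add (hL : IsMonotoneSublinear J L) (hf : NonnegBddCont J f)
    (hg : NonnegBddCont J g) (hφ : NonnegBddCont J φ) (ha : 0 ≤ a) (hb : 0 ≤ b) (hy : y ∈ J)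
    (hle : ∀ x ∈ J, f x ≤ g x + a + b * φ x) :
    L f y ≤ L g y + a + b * L φ y := by
  have hbφ : NonnegBddCont J fun t => b * φ t := hφ.const_mul hb
  have hrest : NonnegBddCont J ((fun _ => a) + fun t => b * φ t) :=
    (NonnegBddCont.const ha).add hbφ
  calc L f y ≤ L (g + ((fun _ => a) + fun t => b * φ t)) y :=
        hL.mono _ _ hf (hg.add hrest) (fun x hx => by simp [← add_assoc, hle x hx]) y hy
    _ ≤ L g y + L ((fun _ => a) + fun t => b * φ t) y := hL.add_le _ _ hg hrest y hy
    _ ≤ L g y + (L (fun _ => a) y + L (fun t => b * φ t) y) := by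
        gcongr
        exact hL.add_le _ _ (NonnegBddCont.const ha) hbφ y hy
    _ = L g y + a + b * L φ y := by
        rw [hL.apply_const ha hy, hL.const_mul b hb φ hφ y hy, add_assoc]

theorem abs_sub_apply_le (hL : IsMonotoneSublinear J L) (hg : NonnegBddCont J g)
    (hφ : NonnegBddCont J φ) (ha : 0 ≤ a) (hb : 0 ≤ b) (hy : y ∈ J)
    (hgφ : ∀ x ∈ J, |g x - g y| ≤ a + b * φ x) :
    |g y - L g y| ≤ a + b * L φ y := by
  have hgy : NonnegBddCont J fun _ => g y := NonnegBddCont.const (hg.2.1 y hy)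
  have hupper := hL.apply_le_apply_add hg hgy hφ ha hb hy fun x hx => by
    linarith [le_abs_self (g x - g y), hgφ x hx]
  have hlower := hL.apply_le_apply_add hgy hg hφ ha hb hy fun x hx => by
    linarith [neg_abs_le (g x - g y), hgφ x hx]
  rw [hL.apply_const (hg.2.1 y hy) hy] at hupper hlower
  rw [abs_sub_le_iff]
  constructor <;> linarith

end IsMonotoneSublinear

theorem shisha_mond_estimate_general (J : Set ℝ) (hJ : J.OrdConnected)
    (L : (ℝ → ℝ) → (ℝ → ℝ))
    (hmono : ∀ g h, NonnegBddCont J g → NonnegBddCont J h →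
      (∀ x ∈ J, g x ≤ h x) → ∀ y ∈ J, L g y ≤ L h y)
    (hsub : ∀ g h, NonnegBddCont J g → NonnegBddCont J h →
      ∀ y ∈ J, L (g + h) y ≤ L g y + L h y)
    (hhom : ∀ c : ℝ, 0 ≤ c → ∀ g, NonnegBddCont J g →
      ∀ y ∈ J, L (fun t => c * g t) y = c * L g y)
    (hone : ∀ y ∈ J, L (fun _ => (1 : ℝ)) y = 1)
    (hphi : ∀ y ∈ J, NonnegBddCont J (fun t => |t - y|))
    (g : ℝ → ℝ) (hg : NonnegBddCont J g)
    (δ : ℝ) (hδ : 0 < δ) (y : ℝ) (hy : y ∈ J) :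
    |g y - L g y| ≤
      (1 + (1 / δ) * L (fun t => |t - y|) y) * omegaMod J g δ := by
  have hL : IsMonotoneSublinear J L := ⟨hmono, hsub, hhom, hone⟩
  have hω : ∀ a ∈ J, ∀ b ∈ J, |a - b| ≤ δ → |g a - g b| ≤ omegaMod J g δ :=
    fun a ha b hb => abs_sub_le_omegaMod hg.exists_abs_le ha hb
  have hω0 : 0 ≤ omegaMod J g δ := (abs_nonneg _).trans (hω y hy y hy (by simpa using hδ.le))
  have hchain (x : ℝ) (hx : x ∈ J) :
      |g x - g y| ≤ omegaMod J g δ + omegaMod J g δ / δ * |x - y| := by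
    have := hJ.abs_sub_le_one_add_div_mul hδ hω hx hy
    linarith [show (1 + |x - y| / δ) * omegaMod J g δ
      = omegaMod J g δ + omegaMod J g δ / δ * |x - y| by ring]
  calc |g y - L g y|
      ≤ omegaMod J g δ + omegaMod J g δ / δ * L (fun t => |t - y|) y :=
        hL.abs_sub_apply_le hg (hphi y hy) hω0 (div_nonneg hω0 hδ.le) hy hchain
    _ = (1 + (1 / δ) * L (fun t => |t - y|) y) * omegaMod J g δ := by ring

theorem shisha_mond_estimate (J : Set ℝ) (hJ : J.OrdConnected)
    (L : (ℝ → ℝ) → (ℝ → ℝ))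
    (hnonneg : ∀ g, NonnegBddCont J g → ∀ y ∈ J, 0 ≤ L g y)
    (hmono : ∀ g h, NonnegBddCont J g → NonnegBddCont J h →
      (∀ x ∈ J, g x ≤ h x) → ∀ y ∈ J, L g y ≤ L h y)
    (hsub : ∀ g h, NonnegBddCont J g → NonnegBddCont J h →
      ∀ y ∈ J, L (g + h) y ≤ L g y + L h y)
    (hhom : ∀ c : ℝ, 0 ≤ c → ∀ g, NonnegBddCont J g →
      ∀ y ∈ J, L (fun t => c * g t) y = c * L g y)
    (hone : ∀ y ∈ J, L (fun _ => (1 : ℝ)) y = 1)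
    (hphi : ∀ y ∈ J, NonnegBddCont J (fun t => |t - y|))
    (g : ℝ → ℝ) (hg : NonnegBddCont J g)
    (δ : ℝ) (hδ : 0 < δ) (y : ℝ) (hy : y ∈ J) :
    |g y - L g y| ≤
      (1 + (1 / δ) * L (fun t => |t - y|) y) * omegaMod J g δ :=
  shisha_mond_estimate_general J hJ L hmono hsub hhom hone hphi g hg δ hδ y hy
end
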